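/- Define φ: U ⊂ ℝ⁶ → ℝ⁶ (on the open set r ≠ 0) by φ(x,y,p,q,z,r) = (−1/r, √3(2p − q²/r), 3z − q³/r, √3(x − q/r), 6(xp − y) − (3/r)(z + xq²) + 2q³/r², q). Then φ is a diffeomorphism onto its image whose differential maps the vector field V₁ = ∂x + p∂y + q∂p + q²∂z + r∂q to a multiple of ∂r, and maps ∂r to a multiple of the vector field W₁ = (∂x + P∂z) + R√3 ∂q + R²√3(∂y + Q∂z) + R³∂p evaluated at the image point (where (X,Y,P,Q,Z,R) denote target coordinates). -/

import Mathlib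

set_option maxHeartbeats 2000000


/- ℝ⁶ with coordinates (x,y,p,q,z,r) = indices (0,1,2,3,4,5). -/

open Real

/-- The map φ from (𝑀̂,Δ) to (K̂,Δ̃), defined for r ≠ 0. -/
noncomputable def phiMap (a : Fin 6 → ℝ) : Fin 6 → ℝ :=
  ![-(1 / a 5),
    Real.sqrt 3 * (2 * a 2 - (a 3)^2 / a 5),
    3 * a 4 - (a 3)^3 / a 5,
    Real.sqrt 3 * (a 0 - a 3 / a 5),
    6 * (a 0 * a 2 - a 1) - (3 / a 5) * (a 4 + a 0 * (a 3)^2) + 2 * (a 3)^3 / (a 5)^2,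
    a 3]

/-- The first generator V₁ = ∂x + p∂y + q∂p + q²∂z + r∂q of Δ. -/
noncomputable def V1 (a : Fin 6 → ℝ) : Fin 6 → ℝ :=
  ![1, a 2, a 3, a 5, (a 3)^2, 0]

/-- The first generator W₁ = (∂x + P∂z) + R√3∂q + R²√3(∂y + Q∂z) + R³∂p of Δ̃
at the point b = (X,Y,P,Q,Z,R). -/
noncomputable def W1 (b : Fin 6 → ℝ) : Fin 6 → ℝ :=
  ![1, Real.sqrt 3 * (b 5)^2, (b 5)^3, Real.sqrt 3 * b 5,
    b 2 + Real.sqrt 3 * (b 5)^2 * b 3, 0]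

/-- The vertical field ∂r. -/
noncomputable def dr : Fin 6 → ℝ := ![0, 0, 0, 0, 0, 1]

@[simp] lemma cons_val_five {α : Type*} (x : α) (u : Fin 5 → α) :
    Matrix.vecCons x u 5 =
      Matrix.vecHead (Matrix.vecTail (Matrix.vecTail (Matrix.vecTail (Matrix.vecTail u)))) :=
  rfl

/-- Jacobian matrix of `phiMap`. -/
noncomputable def Jm (a : Fin 6 → ℝ) : Matrix (Fin 6) (Fin 6) ℝ :=
  ![![0, 0, 0, 0, 0, 1 / (a 5)^2],
    ![0, 0, 2 * Real.sqrt 3, -(2 * Real.sqrt 3 * a 3 / a 5), 0, Real.sqrt 3 * (a 3)^2 / (a 5)^2],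
    ![0, 0, 0, -(3 * (a 3)^2 / a 5), 3, (a 3)^3 / (a 5)^2],
    ![Real.sqrt 3, 0, 0, -(Real.sqrt 3 / a 5), 0, Real.sqrt 3 * a 3 / (a 5)^2],
    ![6 * a 2 - 3 * (a 3)^2 / a 5, -6, 6 * a 0, -(6 * a 0 * a 3 / a 5) + 6 * (a 3)^2 / (a 5)^2,
      -(3 / a 5), 3 * (a 4 + a 0 * (a 3)^2) / (a 5)^2 - 4 * (a 3)^3 / (a 5)^3],
    ![0, 0, 0, 1, 0, 0]]

noncomputable def Lm (a : Fin 6 → ℝ) : (Fin 6 → ℝ) →L[ℝ] (Fin 6 → ℝ) :=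
  LinearMap.toContinuousLinearMap (Matrix.toLin' (Jm a))

lemma Lm_apply (a v : Fin 6 → ℝ) : Lm a v = (Jm a).mulVec v := by
  simp [Lm, Matrix.toLin'_apply]

lemma hasF (a : Fin 6 → ℝ) (h : a 5 ≠ 0) : HasFDerivAt phiMap (Lm a) a := by
  have h0 := hasFDerivAt_apply (𝕜 := ℝ) 0 a
  have h1 := hasFDerivAt_apply (𝕜 := ℝ) 1 a
  have h2 := hasFDerivAt_apply (𝕜 := ℝ) 2 a
  have h3 := hasFDerivAt_apply (𝕜 := ℝ) 3 a
  have h4 := hasFDerivAt_apply (𝕜 := ℝ) 4 a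
  have h5 := hasFDerivAt_apply (𝕜 := ℝ) 5 a
  have hq2 := (hasDerivAt_pow 2 (a 3)).comp_hasFDerivAt a h3
  have hq3 := (hasDerivAt_pow 3 (a 3)).comp_hasFDerivAt a h3
  have hs2 := (hasDerivAt_pow 2 (a 5)).comp_hasFDerivAt a h5
  have hinv := (hasDerivAt_inv h).comp_hasFDerivAt a h5
  have hinv2 := (hasDerivAt_inv (pow_ne_zero 2 h)).comp_hasFDerivAt a hs2
  simp only [Function.comp_def] at hq2 hq3 hs2 hinv hinv2
  apply hasFDerivAt_pi''
  intro i
  fin_cases i <;>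
    simp only [phiMap, Matrix.cons_val_zero, Matrix.cons_val_one, Matrix.head_cons,
      Matrix.cons_val_two, Matrix.tail_cons, Matrix.cons_val_three, Matrix.cons_val_four,
      cons_val_five, Matrix.vecHead, Matrix.vecTail, Function.comp_def, Fin.isValue,
      div_eq_mul_inv, one_div]
  · refine HasFDerivAt.congr_fderiv (hinv.const_mul (1:ℝ)).neg ?_
    refine ContinuousLinearMap.ext fun v => ?_
    simp [Lm_apply, Jm, Matrix.mulVec, dotProduct, Fin.sum_univ_six]
  · refine HasFDerivAt.congr_fderiv (((h2.const_mul 2).sub (hq2.mul hinv)).const_mul (Real.sqrt 3)) ?_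
    refine ContinuousLinearMap.ext fun v => ?_
    simp [Lm_apply, Jm, Matrix.mulVec, dotProduct, Fin.sum_univ_six]
    field_simp
    ring
  · refine HasFDerivAt.congr_fderiv ((h4.const_mul 3).sub (hq3.mul hinv)) ?_
    refine ContinuousLinearMap.ext fun v => ?_
    simp [Lm_apply, Jm, Matrix.mulVec, dotProduct, Fin.sum_univ_six]
    field_simp
    ring
  · refine HasFDerivAt.congr_fderiv ((h0.sub (h3.mul hinv)).const_mul (Real.sqrt 3)) ?_
    refine ContinuousLinearMap.ext fun v => ?_
    simp [Lm_apply, Jm, Matrix.mulVec, dotProduct, Fin.sum_univ_six]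
    field_simp
    ring
  · refine HasFDerivAt.congr_fderiv (((((h0.mul h2).sub h1).const_mul 6).sub
      ((hinv.const_mul 3).mul (h4.add (h0.mul hq2)))).add
      ((hq3.const_mul 2).mul hinv2)) ?_
    refine ContinuousLinearMap.ext fun v => ?_
    simp [Lm_apply, Jm, Matrix.mulVec, dotProduct, Fin.sum_univ_six]
    field_simp
    ring
  · refine HasFDerivAt.congr_fderiv h3 ?_
    refine ContinuousLinearMap.ext fun v => ?_
    simp [Lm_apply, Jm, Matrix.mulVec, dotProduct, Fin.sum_univ_six]

lemma Jm_inj (a : Fin 6 → ℝ) (h : a 5 ≠ 0) (v : Fin 6 → ℝ)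
    (hv : (Jm a).mulVec v = 0) : v = 0 := by
  have s3 : Real.sqrt 3 ≠ 0 := by positivity
  have e0 := congrFun hv 0
  have e1 := congrFun hv 1
  have e2 := congrFun hv 2
  have e3 := congrFun hv 3
  have e4 := congrFun hv 4
  have e5 := congrFun hv 5
  simp [Jm, Matrix.mulVec, dotProduct, Fin.sum_univ_six] at e0 e1 e2 e3 e4
  simp [Jm, Matrix.mulVec, dotProduct, Fin.sum_univ_six] at e5
  have hv5 : v 5 = 0 := e0.resolve_left h
  have hv3 : v 3 = 0 := e5
  rw [hv5, hv3] at e1 e2 e3 e4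
  have hv0 : v 0 = 0 := by
    field_simp [s3] at e3
    have : Real.sqrt 3 * (a 5 ^ 2 * v 0) = 0 := by linear_combination e3
    simpa [s3, h] using this
  have hv2 : v 2 = 0 := by
    field_simp [s3] at e1
    have : Real.sqrt 3 * (2 * a 5 ^ 2 * v 2) = 0 := by linear_combination e1
    simpa [s3, h] using this
  have hv4 : v 4 = 0 := by
    field_simp at e2
    have : 3 * a 5 ^ 2 * v 4 = 0 := by linear_combination e2
    simpa [h] using this
  rw [hv0, hv2, hv4] at e4
  have hv1 : v 1 = 0 := by
    field_simp at e4
    have : 6 * a 5 ^ 3 * v 1 = 0 := by linear_combination -e4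
    simpa [h] using this
  funext i
  fin_cases i
  · exact hv0
  · exact hv1
  · exact hv2
  · exact hv3
  · exact hv4
  · exact hv5

/-- On U = {r ≠ 0}, φ is a diffeomorphism onto its image which interchanges (up
to nonzero scale) the two canonical line subbundles: φ*(V₁) ∥ ∂r and
φ*(∂r) ∥ W₁. -/
theorem phi_interchanges_line_bundles :
    Set.InjOn phiMap {a : Fin 6 → ℝ | a 5 ≠ 0} ∧
    ContDiffOn ℝ (⊤ : ℕ∞) phiMap {a : Fin 6 → ℝ | a 5 ≠ 0} ∧
    (∀ a : Fin 6 → ℝ, a 5 ≠ 0 → Function.Bijective (fderiv ℝ phiMap a)) ∧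
    (∀ a : Fin 6 → ℝ, a 5 ≠ 0 →
      ∃ c : ℝ, c ≠ 0 ∧ fderiv ℝ phiMap a (V1 a) = c • dr) ∧
    (∀ a : Fin 6 → ℝ, a 5 ≠ 0 →
      ∃ c : ℝ, c ≠ 0 ∧ fderiv ℝ phiMap a dr = c • W1 (phiMap a)) := by
  have s3 : Real.sqrt 3 ≠ 0 := by positivity
  have hs3 : Real.sqrt 3 * Real.sqrt 3 = 3 := Real.mul_self_sqrt (by norm_num)
  refine ⟨?_, ?_, ?_, ?_, ?_⟩
  · -- InjOn
    intro a ha b hb hab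
    simp only [Set.mem_setOf_eq] at ha hb
    have e0 := congrFun hab 0
    have e1 := congrFun hab 1
    have e2 := congrFun hab 2
    have e3 := congrFun hab 3
    have e4 := congrFun hab 4
    have e5 := congrFun hab 5
    simp [phiMap] at e0 e1 e2 e3 e4
    have h33 : a 3 = b 3 := by simpa [phiMap] using congrFun hab 5
    have h55 : a 5 = b 5 := e0
    rw [h33, h55] at e1 e2 e3 e4
    have h00 : a 0 = b 0 := by
      field_simp at e3
      exact mul_right_cancel₀ hb (by linear_combination e3)
    have h22 : a 2 = b 2 := by
      field_simp at e1
      exact mul_right_cancel₀ hb (by linear_combination e1 / 2)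
    have h44 : a 4 = b 4 := by
      field_simp at e2
      exact mul_right_cancel₀ hb (by linear_combination e2 / 3)
    have h11 : a 1 = b 1 := by
      rw [h00, h22, h44] at e4
      field_simp at e4
      exact mul_right_cancel₀ (pow_ne_zero 2 hb) (by linear_combination (-1/6 : ℝ) * e4)
    funext i
    fin_cases i
    · exact h00
    · exact h11
    · exact h22
    · exact h33
    · exact h44
    · exact h55
  · -- smooth
    have hc : ∀ i : Fin 6, ContDiffOn ℝ (⊤ : ℕ∞) (fun a : Fin 6 → ℝ => a i) {a : Fin 6 → ℝ | a 5 ≠ 0} :=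
      fun i => ((ContinuousLinearMap.proj (R := ℝ) (φ := fun _ : Fin 6 => ℝ) i).contDiff).contDiffOn
    have hinv : ContDiffOn ℝ (⊤ : ℕ∞) (fun a : Fin 6 → ℝ => (a 5)⁻¹) {a : Fin 6 → ℝ | a 5 ≠ 0} :=
      (hc 5).inv fun x hx => hx
    have hinv2 : ContDiffOn ℝ (⊤ : ℕ∞) (fun a : Fin 6 → ℝ => ((a 5)^2)⁻¹) {a : Fin 6 → ℝ | a 5 ≠ 0} :=
      ((hc 5).pow 2).inv fun x hx => pow_ne_zero 2 hx
    rw [contDiffOn_pi]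
    intro i
    fin_cases i <;>
      simp only [phiMap, Matrix.cons_val_zero, Matrix.cons_val_one, Matrix.head_cons,
        Matrix.cons_val_two, Matrix.tail_cons, Matrix.cons_val_three, Matrix.cons_val_four,
        cons_val_five, Matrix.vecHead, Matrix.vecTail, Function.comp_def, Fin.isValue,
        div_eq_mul_inv, one_div]
    · exact (contDiffOn_const.mul hinv).neg
    · exact contDiffOn_const.mul ((contDiffOn_const.mul (hc 2)).sub (((hc 3).pow 2).mul hinv))
    · exact (contDiffOn_const.mul (hc 4)).sub (((hc 3).pow 3).mul hinv)
    · exact contDiffOn_const.mul ((hc 0).sub ((hc 3).mul hinv))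
    · exact ((contDiffOn_const.mul (((hc 0).mul (hc 2)).sub (hc 1))).sub
        ((contDiffOn_const.mul hinv).mul ((hc 4).add ((hc 0).mul ((hc 3).pow 2))))).add
        ((contDiffOn_const.mul ((hc 3).pow 3)).mul hinv2)
    · exact hc 3
  · -- bijective differential
    intro a h
    rw [(hasF a h).fderiv]
    have hco : ⇑(Lm a) = fun v => (Jm a).mulVec v := funext fun v => Lm_apply a v
    constructor
    · rw [injective_iff_map_eq_zero]
      intro v hv
      exact Jm_inj a h v (by rw [← Lm_apply]; exact hv)
    · have hinj : Function.Injective ⇑(Matrix.toLin' (Jm a)) := by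
        rw [injective_iff_map_eq_zero]
        intro v hv
        exact Jm_inj a h v (by rw [← Matrix.toLin'_apply]; exact hv)
      have hsurj := LinearMap.injective_iff_surjective.mp hinj
      intro w
      obtain ⟨v, hv⟩ := hsurj w
      exact ⟨v, by rw [Lm_apply, ← Matrix.toLin'_apply]; exact hv⟩
  · -- V1 ↦ a5 • dr
    intro a h
    refine ⟨a 5, h, ?_⟩
    rw [(hasF a h).fderiv, Lm_apply]
    funext i
    fin_cases i <;>
      simp [Jm, V1, dr, Matrix.mulVec, dotProduct, Fin.sum_univ_six] <;>
      field_simp <;> ring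
  · -- dr ↦ (1/a5²) • W1
    intro a h
    refine ⟨((a 5)^2)⁻¹, by positivity, ?_⟩
    rw [(hasF a h).fderiv, Lm_apply]
    funext i
    have hsq : Real.sqrt 3 ^ 2 = 3 := Real.sq_sqrt (by norm_num)
    fin_cases i <;>
      simp [Jm, W1, dr, phiMap, Matrix.mulVec, dotProduct, Fin.sum_univ_six] <;>
      field_simp <;> ring_nf <;> (try rw [hsq]) <;> (try ring)
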